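/- Let n be an integer and let a, b : ℤ → ℂ be two-sided sequences with ‖a‖_{n+2} + ‖a‖_{n-2} < ∞ and ‖b‖_{n+2} + ‖b‖_{n-2} < ∞, so that the product coefficients c_l := Σ_{j∈ℤ} a_j b_{l-j} are well defined. Then the strictly negative truncation satisfies ‖[c]₋‖_{n+1} ≤ 5 · (‖a‖_{n+2} + ‖a‖_{n-2}) · (‖b‖_{n+2} + ‖b‖_{n-2}). -/

import Mathlib

/-!
Write `g j = |Γ(j + 1/2)|` and `w m j = e^{m j} / g j`, so that `‖a‖ₘ` is the ℓ²-norm of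
`|a_j| w m j`. Euler's reflection formula gives `g j * g (-j) = π`, and for `p : ℕ` the value
`g p = Γ(p + 1/2)` lies between `√π p! / 2^p` and `√π p!`. Together these give, for `j + k < 0`,
`w (n+1) (j+k) ≤ √π (e^{-|j|} (w (n+2) j + w (n-2) j)) (e^{-|k|} (w (n+2) k + w (n-2) k))`.
Hence `|c_l| w (n+1) l ≤ √π (F ⋆ G)_l` for `l < 0`, with
`F_j = e^{-|j|} |a_j| (w (n+2) j + w (n-2) j)` and `G` built from `b` in the same way.
Young's inequality `‖F ⋆ G‖₂ ≤ ‖F‖₁ ‖G‖₂`, Cauchy–Schwarz against `e^{-|·|}` (whose ℓ²-norm is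
at most `2`) and Minkowski's inequality then bound `‖[c]₋‖_{n+1}` by `2√π ≤ 4` times the
product of the norms.
-/

open scoped ENNReal

/-- The weighted ℓ²-norm `‖a‖ₙ = (Σ_{j∈ℤ} |a_j|² e^{2nj} / |Γ(j+1/2)|²)^{1/2} ∈ [0,∞]`
of a two-sided sequence `a : ℤ → ℂ`. -/
noncomputable def wnorm (n : ℤ) (a : ℤ → ℂ) : ℝ≥0∞ :=
  (∑' j : ℤ, ENNReal.ofReal
      (‖a j‖ ^ 2 * Real.exp (2 * n * j) / ‖Complex.Gamma ((j : ℂ) + 1 / 2)‖ ^ 2)) ^ (1 / 2 : ℝ)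

/-- The strictly negative truncation `[c]₋` of a two-sided sequence. -/
noncomputable def negTrunc (c : ℤ → ℂ) : ℤ → ℂ := fun l => if l < 0 then c l else 0

open Real
open scoped Nat

noncomputable def gammaHalf (j : ℤ) : ℝ := |Gamma (j + 1 / 2)|

theorem norm_Gamma_intCast_add_half (j : ℤ) :
    ‖Complex.Gamma ((j : ℂ) + 1 / 2)‖ = gammaHalf j := by
  have : (j : ℂ) + 1 / 2 = ((j + 1 / 2 : ℝ) : ℂ) := by push_cast; ring
  rw [this, Complex.Gamma_ofReal, Complex.norm_real, Real.norm_eq_abs, gammaHalf]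

theorem gammaHalf_mul_gammaHalf_neg (j : ℤ) : gammaHalf j * gammaHalf (-j) = π := by
  have hsin : sin (π * (j + 1 / 2)) = (-1) ^ j := by
    rw [mul_add, mul_comm, ← cos_int_mul_pi, ← sin_add_pi_div_two]; ring_nf
  have h := Gamma_mul_Gamma_one_sub (j + 1 / 2)
  rw [show 1 - ((j : ℝ) + 1 / 2) = ((-j : ℤ) : ℝ) + 1 / 2 by push_cast; ring, hsin] at h
  rw [gammaHalf, gammaHalf, ← abs_mul, h, abs_div, abs_neg_one_zpow, abs_of_pos pi_pos, div_one]

theorem gammaHalf_pos (j : ℤ) : 0 < gammaHalf j := by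
  refine (abs_nonneg _).lt_of_ne fun h => pi_ne_zero ?_
  rw [← gammaHalf_mul_gammaHalf_neg j, gammaHalf, ← h, zero_mul]

theorem gammaHalf_neg (j : ℤ) : gammaHalf (-j) = π / gammaHalf j :=
  eq_div_of_mul_eq (gammaHalf_pos j).ne' (by rw [mul_comm, gammaHalf_mul_gammaHalf_neg])

theorem gammaHalf_zero : gammaHalf 0 = √π := by
  rw [gammaHalf, Int.cast_zero, zero_add, one_div, ← one_div, Gamma_one_half_eq,
    abs_of_nonneg (sqrt_nonneg _)]

theorem gammaHalf_natCast_succ (p : ℕ) :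
    gammaHalf (p + 1 : ℕ) = (p + 1 / 2) * gammaHalf p := by
  have hp : (p : ℝ) + 1 / 2 ≠ 0 := by positivity
  rw [gammaHalf, gammaHalf,
    show ((p + 1 : ℕ) : ℤ) + (1 / 2 : ℝ) = (p + 1 / 2) + 1 by push_cast; ring,
    Gamma_add_one hp, abs_mul, abs_of_pos (by positivity : (0:ℝ) < p + 1 / 2)]
  norm_cast

theorem gammaHalf_natCast_le_sqrt_pi_mul_factorial (p : ℕ) : gammaHalf p ≤ √π * p ! := by
  induction p with
  | zero => simp [gammaHalf_zero]
  | succ p ih =>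
    rw [gammaHalf_natCast_succ, Nat.factorial_succ, Nat.cast_mul]
    have := gammaHalf_pos p
    calc (p + 1 / 2 : ℝ) * gammaHalf p ≤ (p + 1) * (√π * p !) := by gcongr; linarith
      _ = √π * ((p + 1 : ℕ) * p !) := by push_cast; ring

theorem sqrt_pi_mul_factorial_le_two_pow_mul_gammaHalf (p : ℕ) :
    √π * p ! ≤ 2 ^ p * gammaHalf p := by
  induction p with
  | zero => simp [gammaHalf_zero]
  | succ p ih =>
    rw [gammaHalf_natCast_succ, Nat.factorial_succ, Nat.cast_mul]
    calc √π * ((p + 1 : ℕ) * p ! : ℝ) = (p + 1) * (√π * p !) := by push_cast; ring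
      _ ≤ (p + 1) * (2 ^ p * gammaHalf p) := by gcongr
      _ ≤ (2 * (p + 1 / 2)) * (2 ^ p * gammaHalf p) := by
        have := gammaHalf_pos p
        gcongr
        linarith
      _ = 2 ^ (p + 1) * ((p + 1 / 2) * gammaHalf p) := by ring

theorem gammaHalf_mul_gammaHalf_le (p q : ℕ) :
    gammaHalf p * gammaHalf q ≤ √π * gammaHalf (p + q) := by
  rw [← Nat.cast_add]
  induction q with
  | zero => simp [gammaHalf_zero, mul_comm]
  | succ q ih =>
    rw [← add_assoc, gammaHalf_natCast_succ, gammaHalf_natCast_succ]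
    have := gammaHalf_pos (p + q : ℕ)
    calc gammaHalf p * ((q + 1 / 2) * gammaHalf q)
        = (q + 1 / 2) * (gammaHalf p * gammaHalf q) := by ring
      _ ≤ ((p + q : ℕ) + 1 / 2) * (√π * gammaHalf (p + q : ℕ)) := by
        have := gammaHalf_pos p
        have := gammaHalf_pos q
        gcongr
        exact_mod_cast Nat.le_add_left q p
      _ = √π * (((p + q : ℕ) + 1 / 2) * gammaHalf (p + q : ℕ)) := by ring

theorem sqrt_pi_mul_gammaHalf_add_le (p q : ℕ) :
    √π * gammaHalf (p + q) ≤ 4 ^ (p + q) * (gammaHalf p * gammaHalf q) := by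
  rw [← Nat.cast_add]
  have hfactorial : ((p + q) ! : ℝ) ≤ 2 ^ (p + q) * (p ! * q !) := by
    rw [← Nat.choose_mul_factorial_mul_factorial (Nat.le_add_right p q), Nat.add_sub_cancel_left]
    push_cast
    rw [mul_assoc]
    gcongr
    exact_mod_cast Nat.choose_le_two_pow _ _
  calc √π * gammaHalf (p + q : ℕ) ≤ √π * (√π * (p + q) !) := by
        gcongr; exact gammaHalf_natCast_le_sqrt_pi_mul_factorial _
    _ ≤ √π * (√π * (2 ^ (p + q) * (p ! * q !))) := by gcongr
    _ = 2 ^ (p + q) * ((√π * p !) * (√π * q !)) := by ring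
    _ ≤ 2 ^ (p + q) * ((2 ^ p * gammaHalf p) * (2 ^ q * gammaHalf q)) := by
        gcongr 2 ^ (p + q) * ?_
        exact mul_le_mul (sqrt_pi_mul_factorial_le_two_pow_mul_gammaHalf p)
          (sqrt_pi_mul_factorial_le_two_pow_mul_gammaHalf q)
          (by positivity) (mul_nonneg (by positivity) (gammaHalf_pos p).le)
    _ = 4 ^ (p + q) * (gammaHalf p * gammaHalf q) := by
        rw [show (4 : ℝ) = 2 * 2 by norm_num, mul_pow, pow_add]; ring

theorem exp_div_gammaHalf_add_le_of_nonneg {j k : ℤ} (hj : 0 ≤ j) (hjk : j + k < 0) :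
    exp ↑(j + k) / gammaHalf (j + k) ≤
      √π * (exp |(j : ℝ)| / gammaHalf j) * (exp |(k : ℝ)| / gammaHalf k) := by
  lift j to ℕ using hj with p
  obtain ⟨q, hq⟩ : ∃ q : ℕ, (p : ℤ) + k = -q := ⟨(-(p + k)).toNat, by omega⟩
  obtain rfl : k = -(p + q : ℕ) := by omega
  rw [hq, gammaHalf_neg, gammaHalf_neg]
  push_cast
  rw [abs_of_nonneg (by positivity), abs_of_nonpos (by linarith)]
  have := gammaHalf_pos p
  have := gammaHalf_pos q
  have key : exp (-q) * (gammaHalf p * gammaHalf q) ≤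
      exp p * exp (p + q) * (√π * gammaHalf (p + q)) := by
    rw [← exp_add]
    exact mul_le_mul (exp_le_exp.2 (by linarith)) (gammaHalf_mul_gammaHalf_le p q)
      (by positivity) (by positivity)
  field_simp
  linear_combination key

theorem exp_div_gammaHalf_add_le_of_neg {j k : ℤ} (hj : j < 0) (hk : k < 0) :
    exp ↑(j + k) / gammaHalf (j + k) ≤
      √π * (exp |(j : ℝ)| / gammaHalf j) * (exp |(k : ℝ)| / gammaHalf k) := by
  obtain ⟨p, rfl⟩ : ∃ p : ℕ, j = -p := ⟨j.natAbs, by omega⟩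
  obtain ⟨q, rfl⟩ : ∃ q : ℕ, k = -q := ⟨k.natAbs, by omega⟩
  rw [← neg_add, gammaHalf_neg, gammaHalf_neg, gammaHalf_neg]
  push_cast
  rw [abs_neg, abs_neg, Nat.abs_cast, Nat.abs_cast]
  have := gammaHalf_pos p
  have := gammaHalf_pos q
  have := gammaHalf_pos (p + q)
  have four_pow_le : (4 : ℝ) ^ (p + q) ≤ exp (2 * (p + q)) := by
    have two_le_exp_one : 2 ≤ exp 1 := by linarith [add_one_le_exp 1]
    rw [show (2 * (p + q) : ℝ) = (p + q : ℕ) * 2 by push_cast; ring, exp_nat_mul]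
    refine pow_le_pow_left₀ (by norm_num) ?_ _
    calc (4 : ℝ) = 2 * 2 := by norm_num
      _ ≤ exp 1 * exp 1 := by gcongr
      _ = exp 2 := by rw [← exp_add]; norm_num
  have key : √π * gammaHalf (p + q) ≤ exp (2 * (p + q)) * (gammaHalf p * gammaHalf q) :=
    (sqrt_pi_mul_gammaHalf_add_le p q).trans (by gcongr)
  field_simp
  calc exp (-(p + q)) * π * gammaHalf (p + q)
      = exp (-(p + q)) * √π * (√π * gammaHalf (p + q)) := by
        linear_combination (exp (-(p + q)) * gammaHalf (p + q)) * (mul_self_sqrt pi_pos.le).symm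
    _ ≤ exp (-(p + q)) * √π * (exp (2 * (p + q)) * (gammaHalf p * gammaHalf q)) := by gcongr
    _ = √π * exp (-(p + q) + 2 * (p + q)) * gammaHalf p * gammaHalf q := by rw [exp_add]; ring
    _ = √π * exp p * gammaHalf p * exp q * gammaHalf q := by
        rw [show -(p + q) + 2 * (p + q) = (p + q : ℝ) by ring, exp_add]; ring

theorem exp_div_gammaHalf_add_le {j k : ℤ} (hjk : j + k < 0) :
    exp ↑(j + k) / gammaHalf (j + k) ≤
      √π * (exp |(j : ℝ)| / gammaHalf j) * (exp |(k : ℝ)| / gammaHalf k) := by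
  rcases le_or_gt 0 j with hj | hj
  · exact exp_div_gammaHalf_add_le_of_nonneg hj hjk
  rcases le_or_gt 0 k with hk | hk
  · rw [add_comm j, mul_right_comm]
    exact exp_div_gammaHalf_add_le_of_nonneg hk (by omega)
  · exact exp_div_gammaHalf_add_le_of_neg hj hk

noncomputable def weight (m j : ℤ) : ℝ := exp (m * j) / gammaHalf j

theorem weight_pos (m j : ℤ) : 0 < weight m j := div_pos (exp_pos _) (gammaHalf_pos j)

theorem exp_abs_mul_weight_le (n j : ℤ) :
    exp |(j : ℝ)| * weight n j ≤ exp (-|(j : ℝ)|) * (weight (n + 2) j + weight (n - 2) j) := by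
  rw [weight, weight, weight, ← add_div, mul_div_assoc', mul_div_assoc']
  refine div_le_div_of_nonneg_right ?_ (gammaHalf_pos j).le
  rcases abs_cases (j : ℝ) with ⟨h, -⟩ | ⟨h, -⟩ <;> rw [h]
  · calc exp j * exp (n * j) = exp (-j) * exp (((n + 2 : ℤ) : ℝ) * j) := by
          rw [← exp_add, ← exp_add]; push_cast; ring_nf
      _ ≤ _ := by gcongr; exact le_add_of_nonneg_right (exp_pos _).le
  · calc exp (-j) * exp (n * j) = exp (-(-j)) * exp (((n - 2 : ℤ) : ℝ) * j) := by
          rw [← exp_add, ← exp_add]; push_cast; ring_nf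
      _ ≤ _ := by gcongr; exact le_add_of_nonneg_left (exp_pos _).le

theorem weight_add_le (n : ℤ) {j k : ℤ} (hjk : j + k < 0) :
    weight (n + 1) (j + k) ≤
      √π * (exp (-|(j : ℝ)|) * (weight (n + 2) j + weight (n - 2) j)) *
        (exp (-|(k : ℝ)|) * (weight (n + 2) k + weight (n - 2) k)) := by
  have := weight_pos n j
  have := weight_pos n k
  calc weight (n + 1) (j + k)
      = exp (n * j) * exp (n * k) * (exp ↑(j + k) / gammaHalf (j + k)) := by
        rw [weight, ← exp_add, mul_div_assoc', ← exp_add]; push_cast; ring_nf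
    _ ≤ exp (n * j) * exp (n * k) *
          (√π * (exp |(j : ℝ)| / gammaHalf j) * (exp |(k : ℝ)| / gammaHalf k)) := by
        gcongr; exact exp_div_gammaHalf_add_le hjk
    _ = √π * (exp |(j : ℝ)| * weight n j) * (exp |(k : ℝ)| * weight n k) := by
        simp only [weight]; ring
    _ ≤ _ := by
        refine mul_le_mul (mul_le_mul_of_nonneg_left (exp_abs_mul_weight_le n j) (sqrt_nonneg _))
          (exp_abs_mul_weight_le n k) (by positivity) ?_
        have := weight_pos (n + 2) j
        have := weight_pos (n - 2) j
        positivity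

section L2

variable {ι : Type*}

noncomputable def l2Norm (f : ι → ℝ≥0∞) : ℝ≥0∞ := (∑' i, f i ^ 2) ^ (1 / 2 : ℝ)

theorem sq_l2Norm (f : ι → ℝ≥0∞) : l2Norm f ^ 2 = ∑' i, f i ^ 2 := by
  rw [l2Norm, one_div]
  exact_mod_cast ENNReal.rpow_inv_natCast_pow two_ne_zero _

theorem l2Norm_le_iff {f : ι → ℝ≥0∞} {C : ℝ≥0∞} : l2Norm f ≤ C ↔ ∑' i, f i ^ 2 ≤ C ^ 2 := by
  rw [l2Norm, one_div, ENNReal.rpow_inv_le_iff two_pos, ENNReal.rpow_two]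

theorem l2Norm_mono {f g : ι → ℝ≥0∞} (h : ∀ i, f i ≤ g i) : l2Norm f ≤ l2Norm g := by
  unfold l2Norm
  gcongr with i
  exact h i

theorem l2Norm_const_mul (c : ℝ≥0∞) (f : ι → ℝ≥0∞) :
    l2Norm (fun i => c * f i) = c * l2Norm f := by
  simp only [l2Norm, mul_pow, ENNReal.tsum_mul_left]
  rw [ENNReal.mul_rpow_of_nonneg _ _ (by norm_num), one_div]
  congr
  exact_mod_cast ENNReal.pow_rpow_inv_natCast two_ne_zero c

theorem tsum_mul_le_l2Norm_mul_l2Norm (f g : ι → ℝ≥0∞) :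
    ∑' i, f i * g i ≤ l2Norm f * l2Norm g := by
  rw [ENNReal.tsum_eq_iSup_sum]
  refine iSup_le fun s => (ENNReal.inner_le_Lp_mul_Lq s f g .two_two).trans ?_
  simp only [ENNReal.rpow_two, l2Norm]
  gcongr <;> exact ENNReal.sum_le_tsum s

theorem l2Norm_add_le (f g : ι → ℝ≥0∞) : l2Norm (f + g) ≤ l2Norm f + l2Norm g := by
  rw [l2Norm_le_iff, ENNReal.tsum_eq_iSup_sum]
  refine iSup_le fun s => ?_
  have h := ENNReal.Lp_add_le s f g one_le_two
  simp only [ENNReal.rpow_two] at h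
  rw [one_div, ENNReal.rpow_inv_le_iff two_pos, ENNReal.rpow_two] at h
  refine h.trans ?_
  simp only [l2Norm, one_div]
  gcongr <;> exact ENNReal.sum_le_tsum s

theorem sq_tsum_mul_le (w x : ι → ℝ≥0∞) :
    (∑' i, w i * x i) ^ 2 ≤ (∑' i, w i) * ∑' i, w i * x i ^ 2 := by
  set r : ι → ℝ≥0∞ := fun i => w i ^ (2⁻¹ : ℝ)
  have hr (i : ι) : r i ^ 2 = w i := by
    exact_mod_cast ENNReal.rpow_inv_natCast_pow two_ne_zero (w i)
  calc (∑' i, w i * x i) ^ 2 = (∑' i, r i * (r i * x i)) ^ 2 := by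
        simp_rw [← mul_assoc, ← sq, hr]
    _ ≤ (l2Norm r * l2Norm (fun i => r i * x i)) ^ 2 := by
        gcongr; exact tsum_mul_le_l2Norm_mul_l2Norm _ _
    _ = (∑' i, w i) * ∑' i, w i * x i ^ 2 := by simp_rw [mul_pow, sq_l2Norm, mul_pow, hr]

theorem l2Norm_conv_le [AddGroup ι] (f g : ι → ℝ≥0∞) :
    l2Norm (fun l => ∑' j, f j * g (l - j)) ≤ (∑' j, f j) * l2Norm g := by
  rw [l2Norm_le_iff, mul_pow, sq_l2Norm]
  calc ∑' l, (∑' j, f j * g (l - j)) ^ 2 ≤ ∑' l, (∑' j, f j) * ∑' j, f j * g (l - j) ^ 2 :=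
        ENNReal.tsum_le_tsum fun l => sq_tsum_mul_le f _
    _ = (∑' j, f j) * ∑' j, f j * ∑' l, g (l - j) ^ 2 := by
        rw [ENNReal.tsum_mul_left, ENNReal.tsum_comm]
        exact congrArg _ (tsum_congr fun j => ENNReal.tsum_mul_left)
    _ = (∑' j, f j) ^ 2 * ∑' k, g k ^ 2 := by
        have shift (j : ι) : ∑' l, g (l - j) ^ 2 = ∑' k, g k ^ 2 :=
          (Equiv.subRight j).tsum_eq fun k => g k ^ 2
        simp_rw [shift]
        rw [ENNReal.tsum_mul_right, sq, mul_assoc]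

end L2

theorem l2Norm_exp_neg_abs_le : l2Norm (fun j : ℤ => ENNReal.ofReal (exp (-|(j : ℝ)|))) ≤ 2 := by
  have hle (j : ℤ) : ENNReal.ofReal (exp (-|(j : ℝ)|)) ^ 2 ≤ 2⁻¹ ^ j.natAbs := by
    have hle_one : exp (-|(j : ℝ)|) ≤ 1 := exp_le_one_iff.2 (by simp)
    calc ENNReal.ofReal (exp (-|(j : ℝ)|)) ^ 2 ≤ ENNReal.ofReal (exp (-|(j : ℝ)|)) := by
          rw [sq]; exact mul_le_of_le_one_left' (ENNReal.ofReal_le_one.2 hle_one)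
      _ ≤ ENNReal.ofReal ((1 / 2) ^ j.natAbs) := by
          rw [← Int.cast_abs, ← Nat.cast_natAbs, ← mul_neg_one, exp_nat_mul]
          gcongr
          exact exp_neg_one_lt_half.le
      _ = 2⁻¹ ^ j.natAbs := by
          rw [ENNReal.ofReal_pow (by norm_num), one_div, ENNReal.ofReal_inv_of_pos two_pos,
            ENNReal.ofReal_ofNat]
  rw [l2Norm_le_iff]
  calc ∑' j : ℤ, ENNReal.ofReal (exp (-|(j : ℝ)|)) ^ 2 ≤ ∑' j : ℤ, 2⁻¹ ^ j.natAbs :=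
        ENNReal.tsum_le_tsum hle
    _ = ∑' m : ℕ, 2⁻¹ ^ m + ∑' m : ℕ, 2⁻¹ ^ (m + 1) :=
        tsum_of_nat_of_neg_add_one ENNReal.summable ENNReal.summable
    _ ≤ 2 + 2 := by
        gcongr
        · exact ENNReal.tsum_geometric_two.le
        · refine (ENNReal.tsum_le_tsum fun m => ?_).trans ENNReal.tsum_geometric_two.le
          exact pow_le_pow_right_of_le_one' (by norm_num) m.le_succ
    _ = 2 ^ 2 := by norm_num

noncomputable def weightedSeq (m : ℤ) (a : ℤ → ℂ) (j : ℤ) : ℝ≥0∞ :=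
  ‖a j‖ₑ * ENNReal.ofReal (weight m j)

theorem wnorm_eq_l2Norm (m : ℤ) (a : ℤ → ℂ) : wnorm m a = l2Norm (weightedSeq m a) := by
  unfold wnorm l2Norm weightedSeq
  congr 1
  refine tsum_congr fun j => ?_
  have := gammaHalf_pos j
  rw [norm_Gamma_intCast_add_half, ← ofReal_norm, ← ENNReal.ofReal_mul (norm_nonneg _),
    ← ENNReal.ofReal_pow (mul_nonneg (norm_nonneg _) (weight_pos m j).le), weight, mul_pow,
    div_pow, ← exp_nat_mul]
  push_cast
  ring_nf

theorem l2Norm_weightedSeq_add_le (n : ℤ) (a : ℤ → ℂ) :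
    l2Norm (weightedSeq (n + 2) a + weightedSeq (n - 2) a) ≤ wnorm (n + 2) a + wnorm (n - 2) a := by
  rw [wnorm_eq_l2Norm, wnorm_eq_l2Norm]
  exact l2Norm_add_le _ _

noncomputable def dampedSeq (n : ℤ) (a : ℤ → ℂ) (j : ℤ) : ℝ≥0∞ :=
  (weightedSeq (n + 2) a j + weightedSeq (n - 2) a j) * ENNReal.ofReal (exp (-|(j : ℝ)|))

theorem tsum_dampedSeq_le (n : ℤ) (a : ℤ → ℂ) :
    ∑' j, dampedSeq n a j ≤ (wnorm (n + 2) a + wnorm (n - 2) a) * 2 :=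
  (tsum_mul_le_l2Norm_mul_l2Norm _ _).trans
    (mul_le_mul' (l2Norm_weightedSeq_add_le n a) l2Norm_exp_neg_abs_le)

theorem l2Norm_dampedSeq_le (n : ℤ) (a : ℤ → ℂ) :
    l2Norm (dampedSeq n a) ≤ wnorm (n + 2) a + wnorm (n - 2) a := by
  refine (l2Norm_mono fun j => ?_).trans (l2Norm_weightedSeq_add_le n a)
  refine mul_le_of_le_one_right' (ENNReal.ofReal_le_one.2 (exp_le_one_iff.2 ?_))
  simp

theorem enorm_tsum_mul_weight_le (n : ℤ) (a b : ℤ → ℂ) {l : ℤ} (hl : l < 0) :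
    ‖∑' j, a j * b (l - j)‖ₑ * ENNReal.ofReal (weight (n + 1) l) ≤
      ENNReal.ofReal √π * ∑' j, dampedSeq n a j * dampedSeq n b (l - j) := by
  have hterm (j : ℤ) : ‖a j‖ₑ * ‖b (l - j)‖ₑ * ENNReal.ofReal (weight (n + 1) l) ≤
      ENNReal.ofReal √π * (dampedSeq n a j * dampedSeq n b (l - j)) := by
    have h := weight_add_le n (j := j) (k := l - j) (by omega)
    rw [add_sub_cancel] at h
    have := weight_pos (n + 2) j
    have := weight_pos (n - 2) j
    have := weight_pos (n + 2) (l - j)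
    have := weight_pos (n - 2) (l - j)
    refine (mul_le_mul_right (ENNReal.ofReal_le_ofReal h) _).trans_eq ?_
    simp only [dampedSeq, weightedSeq]
    rw [ENNReal.ofReal_mul (by positivity), ENNReal.ofReal_mul (by positivity),
      ENNReal.ofReal_mul (by positivity), ENNReal.ofReal_mul (by positivity),
      ENNReal.ofReal_add (by positivity) (by positivity),
      ENNReal.ofReal_add (by positivity) (by positivity)]
    ring
  calc ‖∑' j, a j * b (l - j)‖ₑ * ENNReal.ofReal (weight (n + 1) l)
      ≤ (∑' j, ‖a j * b (l - j)‖ₑ) * ENNReal.ofReal (weight (n + 1) l) := by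
        gcongr; exact enorm_tsum_le_tsum_enorm
    _ ≤ ∑' j, ENNReal.ofReal √π * (dampedSeq n a j * dampedSeq n b (l - j)) := by
        rw [← ENNReal.tsum_mul_right]
        exact ENNReal.tsum_le_tsum fun j => by rw [enorm_mul]; exact hterm j
    _ = ENNReal.ofReal √π * ∑' j, dampedSeq n a j * dampedSeq n b (l - j) := ENNReal.tsum_mul_left

theorem negTrunc_product_estimate_general (n : ℤ) (a b : ℤ → ℂ)
    (c : ℤ → ℂ) (hc : ∀ l : ℤ, c l = ∑' j : ℤ, a j * b (l - j)) :
    wnorm (n + 1) (negTrunc c) ≤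
      5 * (wnorm (n + 2) a + wnorm (n - 2) a) * (wnorm (n + 2) b + wnorm (n - 2) b) := by
  have hpoint (l : ℤ) : weightedSeq (n + 1) (negTrunc c) l ≤
      ENNReal.ofReal √π * ∑' j, dampedSeq n a j * dampedSeq n b (l - j) := by
    by_cases hl : l < 0
    · simpa only [weightedSeq, negTrunc, hl, if_true, hc] using enorm_tsum_mul_weight_le n a b hl
    · simp [weightedSeq, negTrunc, hl]
  have hsqrt_pi : ENNReal.ofReal √π ≤ 2 := by
    rw [← ENNReal.ofReal_ofNat 2]
    refine ENNReal.ofReal_le_ofReal (sqrt_le_iff.2 ⟨by norm_num, ?_⟩)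
    linarith [pi_le_four]
  calc wnorm (n + 1) (negTrunc c) = l2Norm (weightedSeq (n + 1) (negTrunc c)) := wnorm_eq_l2Norm _ _
    _ ≤ ENNReal.ofReal √π * l2Norm fun l => ∑' j, dampedSeq n a j * dampedSeq n b (l - j) := by
        rw [← l2Norm_const_mul]; exact l2Norm_mono hpoint
    _ ≤ 2 * (((wnorm (n + 2) a + wnorm (n - 2) a) * 2) * (wnorm (n + 2) b + wnorm (n - 2) b)) := by
        gcongr
        exact (l2Norm_conv_le _ _).trans
          (mul_le_mul' (tsum_dampedSeq_le n a) (l2Norm_dampedSeq_le n b))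
    _ = 4 * (wnorm (n + 2) a + wnorm (n - 2) a) * (wnorm (n + 2) b + wnorm (n - 2) b) := by ring
    _ ≤ 5 * (wnorm (n + 2) a + wnorm (n - 2) a) * (wnorm (n + 2) b + wnorm (n - 2) b) := by
        gcongr; norm_num

/-- If `‖a‖_{n+2} + ‖a‖_{n-2} < ∞` and `‖b‖_{n+2} + ‖b‖_{n-2} < ∞`,
and `c_l := Σ_{j∈ℤ} a_j b_{l-j}`, then
`‖[c]₋‖_{n+1} ≤ 5 · (‖a‖_{n+2} + ‖a‖_{n-2}) · (‖b‖_{n+2} + ‖b‖_{n-2})`. -/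
theorem negTrunc_product_estimate (n : ℤ) (a b : ℤ → ℂ)
    (ha : wnorm (n + 2) a + wnorm (n - 2) a < ⊤)
    (hb : wnorm (n + 2) b + wnorm (n - 2) b < ⊤)
    (c : ℤ → ℂ) (hc : ∀ l : ℤ, c l = ∑' j : ℤ, a j * b (l - j)) :
    wnorm (n + 1) (negTrunc c) ≤
      5 * (wnorm (n + 2) a + wnorm (n - 2) a) * (wnorm (n + 2) b + wnorm (n - 2) b) :=
  negTrunc_product_estimate_general n a b c hc
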